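/- Let φ = (√5-1)/2. Then Li_{2,1}(φ^2) = Li_3(1) - Li_3(φ) - ln(φ)*Li_2(φ^2) - ln^3(φ) + (π^2/6)*ln(φ). -/

import Mathlib

open Real Finset

noncomputable def H (n : ℕ) : ℝ := ∑ k ∈ Finset.range n, 1 / ((k : ℝ) + 1)

noncomputable def H2 (n : ℕ) : ℝ := ∑ k ∈ Finset.range n, 1 / ((k : ℝ) + 1) ^ 2

noncomputable def zeta11 (n : ℕ) : ℝ :=
  ∑ k ∈ Finset.range n, ∑ j ∈ Finset.range k, 1 / (((k : ℝ) + 1) * ((j : ℝ) + 1))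

noncomputable def Li (m : ℕ) (x : ℝ) : ℝ := ∑' n : ℕ, x ^ (n + 1) / ((n : ℝ) + 1) ^ m

noncomputable def Li21 (x : ℝ) : ℝ := ∑' n : ℕ, x ^ (n + 1) * H n / ((n : ℝ) + 1) ^ 2

noncomputable def Li31 (x : ℝ) : ℝ := ∑' n : ℕ, x ^ (n + 1) * H n / ((n : ℝ) + 1) ^ 3

noncomputable def zeta3 : ℝ := ∑' n : ℕ, 1 / ((n : ℝ) + 1) ^ 3

noncomputable def zeta31 : ℝ := ∑' n : ℕ, H n / ((n : ℝ) + 1) ^ 3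



lemma H_zero : H 0 = 0 := by simp [H]

lemma H_succ (n : ℕ) : H (n + 1) = H n + 1 / ((n : ℝ) + 1) := by
  simp [H, Finset.sum_range_succ]

lemma H_nonneg (n : ℕ) : 0 ≤ H n := by
  apply Finset.sum_nonneg; intro k _; positivity

lemma H_le (n : ℕ) : H n ≤ n := by
  calc H n ≤ ∑ k ∈ Finset.range n, (1:ℝ) := by
        apply Finset.sum_le_sum; intro k _
        rw [div_le_one (by positivity)]; linarith [Nat.cast_nonneg (α := ℝ) k]
    _ = n := by simp

-- summability of coefficient series with bounded coefficients
lemma summable_aux {p : ℕ → ℝ} (hp : ∀ n, |p n| ≤ 1) {x : ℝ} (hx : |x| < 1) :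
    Summable (fun n => p n * x ^ (n + 1)) := by
  apply Summable.of_norm_bounded (g := fun n => |x| ^ (n + 1))
  · exact (summable_geometric_of_lt_one (abs_nonneg x) hx).comp_injective
      (add_left_injective 1)
  · intro n
    rw [norm_mul, norm_pow, Real.norm_eq_abs, Real.norm_eq_abs]
    calc |p n| * |x| ^ (n+1) ≤ 1 * |x| ^ (n+1) := by
          apply mul_le_mul_of_nonneg_right (hp n) (by positivity)
      _ = |x| ^ (n+1) := one_mul _

lemma summable_deriv_aux {x : ℝ} (hx : |x| < 1) :
    Summable (fun n : ℕ => ((n : ℝ) + 1) * |x| ^ n) := by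
  have h1 : Summable (fun n : ℕ => (n : ℝ) ^ 1 * |x| ^ n) :=
    summable_pow_mul_geometric_of_norm_lt_one 1 (by rwa [Real.norm_eq_abs, abs_abs])
  have h2 : Summable (fun n : ℕ => |x| ^ n) :=
    summable_geometric_of_lt_one (abs_nonneg x) hx
  refine (h1.add h2).congr fun n => ?_
  push_cast; ring

lemma hasDerivAt_of_eq {f : ℝ → ℝ} {a b x : ℝ} (h : HasDerivAt f b x) (e : a = b) :
    HasDerivAt f a x := e ▸ h

lemma key_deriv (p : ℕ → ℝ) (hp : ∀ n, |p n| ≤ 1) {x : ℝ} (hx : |x| < 1) :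
    HasDerivAt (fun y => ∑' n : ℕ, p n * y ^ (n + 1)) (∑' n : ℕ, ((n : ℝ) + 1) * p n * x ^ n) x := by
  set r : ℝ := (1 + |x|) / 2 with hr
  have hxr : |x| < r := by rw [hr]; linarith
  have hr1 : r < 1 := by rw [hr]; linarith
  have hr0 : 0 ≤ r := le_trans (abs_nonneg x) hxr.le
  refine hasDerivAt_tsum_of_isPreconnected
    (u := fun n : ℕ => ((n : ℝ) + 1) * r ^ n) (t := Set.Ioo (-r) r) (y₀ := 0)
    (g := fun (n : ℕ) (y : ℝ) => p n * y ^ (n + 1))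
    (g' := fun (n : ℕ) (y : ℝ) => ((n : ℝ) + 1) * p n * y ^ n)
    ?_ ?_ ?_ ?_ ?_ ?_ ?_ ?_
  · have h := summable_deriv_aux (x := r) (by rwa [abs_of_nonneg hr0])
    rwa [abs_of_nonneg hr0] at h
  · exact isOpen_Ioo
  · exact (convex_Ioo _ _).isPreconnected
  · intro n y _
    have h := (hasDerivAt_pow (n + 1) y).const_mul (p n)
    refine hasDerivAt_of_eq h ?_
    push_cast; ring
  · intro n y hy
    have hyr : |y| ≤ r := by
      rw [abs_le]; exact ⟨hy.1.le, hy.2.le⟩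
    rw [Real.norm_eq_abs, abs_mul, abs_mul, abs_pow]
    have h1 : |((n : ℝ) + 1)| = (n : ℝ) + 1 := abs_of_nonneg (by positivity)
    rw [h1]
    calc ((n : ℝ) + 1) * |p n| * |y| ^ n ≤ ((n : ℝ) + 1) * 1 * r ^ n := by
          apply mul_le_mul (by apply mul_le_mul_of_nonneg_left (hp n) (by positivity))
            (pow_le_pow_left₀ (abs_nonneg y) hyr n) (by positivity) (by positivity)
      _ = ((n : ℝ) + 1) * r ^ n := by ring
  · constructor
    · simp only [neg_lt_zero]; rw [hr]; positivity
    · rw [hr]; positivity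
  · apply Summable.congr summable_zero
    intro n; simp
  · exact ⟨by linarith [neg_abs_le x, abs_nonneg x, hxr], lt_of_abs_lt hxr⟩

lemma np1_pos (n : ℕ) : (0:ℝ) < (n : ℝ) + 1 := by positivity

lemma np1_ne (n : ℕ) : ((n : ℝ) + 1) ≠ 0 := (np1_pos n).ne'

-- MVT-based helpers
lemma const_of_deriv_zero_Ioo {a b : ℝ} {f : ℝ → ℝ}
    (hf : ∀ x ∈ Set.Ioo a b, HasDerivAt f 0 x) {x y : ℝ}
    (hx : x ∈ Set.Ioo a b) (hy : y ∈ Set.Ioo a b) : f x = f y := by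
  have aux : ∀ u v : ℝ, u ∈ Set.Ioo a b → v ∈ Set.Ioo a b → u < v → f u = f v := by
    intro u v hu hv huv
    have hsub : Set.Icc u v ⊆ Set.Ioo a b := fun z hz =>
      ⟨lt_of_lt_of_le hu.1 hz.1, lt_of_le_of_lt hz.2 hv.2⟩
    have hcont : ContinuousOn f (Set.Icc u v) := fun z hz =>
      (hf z (hsub hz)).continuousAt.continuousWithinAt
    obtain ⟨c, hc, hslope⟩ := exists_hasDerivAt_eq_slope f (fun _ => 0) huv hcont
      (fun z hz => hf z (hsub ⟨hz.1.le, hz.2.le⟩))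
    have h0 : (0:ℝ) = (f v - f u) / (v - u) := hslope
    have hne : v - u ≠ 0 := sub_ne_zero.2 (ne_of_gt huv)
    have h2 := (div_eq_iff hne).1 h0.symm
    have : f v - f u = 0 := by rw [h2]; ring
    linarith
  rcases lt_trichotomy x y with h | h | h
  · exact aux x y hx hy h
  · rw [h]
  · exact (aux y x hy hx h).symm

lemma eq_const_of_limit {f : ℝ → ℝ} {c : ℝ}
    (hf : ∀ x ∈ Set.Ioo (0:ℝ) 1, HasDerivAt f 0 x)
    (hlim : Filter.Tendsto f (nhdsWithin 0 (Set.Ioi 0)) (nhds c)) {x : ℝ}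
    (hx : x ∈ Set.Ioo (0:ℝ) 1) : f x = c := by
  have he : (fun _ : ℝ => f x) =ᶠ[nhdsWithin 0 (Set.Ioi 0)] f := by
    filter_upwards [Ioo_mem_nhdsGT_of_mem (Set.mem_Ico.2 ⟨le_refl (0:ℝ), one_pos⟩)]
      with z hz
    exact const_of_deriv_zero_Ioo hf hx hz
  exact tendsto_nhds_unique (Filter.Tendsto.congr' he tendsto_const_nhds) hlim

-- rewriting into coefficient form
lemma Li_eq (m : ℕ) (x : ℝ) : Li m x = ∑' n : ℕ, (1 / ((n : ℝ) + 1) ^ m) * x ^ (n + 1) :=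
  tsum_congr fun n => by ring

lemma Li21_eq (x : ℝ) : Li21 x = ∑' n : ℕ, (H n / ((n : ℝ) + 1) ^ 2) * x ^ (n + 1) :=
  tsum_congr fun n => by ring

lemma c_bound (m : ℕ) (n : ℕ) : |1 / ((n : ℝ) + 1) ^ m| ≤ 1 := by
  have h1 : (1:ℝ) ≤ ((n : ℝ) + 1) ^ m := one_le_pow₀ (by linarith [Nat.cast_nonneg (α := ℝ) n])
  rw [abs_of_nonneg (by positivity), div_le_one (by positivity)]
  linarith

lemma cH_bound (m : ℕ) (hm : 1 ≤ m) (n : ℕ) : |H n / ((n : ℝ) + 1) ^ m| ≤ 1 := by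
  have h0 : (0:ℝ) ≤ (n : ℝ) := Nat.cast_nonneg n
  have h1 : ((n : ℝ) + 1) ≤ ((n : ℝ) + 1) ^ m := le_self_pow₀ (by linarith) (by omega)
  have h2 : H n ≤ ((n : ℝ) + 1) ^ m := le_trans (le_trans (H_le n) (by linarith)) h1
  rw [abs_of_nonneg (div_nonneg (H_nonneg n) (by positivity)), div_le_one (by positivity)]
  exact h2

lemma tsum_shift_div {x : ℝ} (hx0 : x ≠ 0) (c : ℕ → ℝ) :
    ∑' n : ℕ, c n * x ^ n = (∑' n : ℕ, c n * x ^ (n + 1)) / x := by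
  rw [show (fun n : ℕ => c n * x ^ (n + 1)) = fun n : ℕ => x * (c n * x ^ n) from
    funext fun n => by ring, tsum_mul_left, mul_div_cancel_left₀ _ hx0]

lemma hasDerivAt_log_one_sub {x : ℝ} (hx : x < 1) :
    HasDerivAt (fun y : ℝ => Real.log (1 - y)) (-(1 - x)⁻¹) x := by
  have h1 : HasDerivAt (fun y : ℝ => 1 - y) (-1) x := (hasDerivAt_id x).const_sub 1
  have h2 := (Real.hasDerivAt_log (sub_ne_zero.2 (ne_of_gt (by linarith)))).comp x h1
  refine hasDerivAt_of_eq h2 ?_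
  ring

lemma hasDerivAt_Li2 {x : ℝ} (hx : |x| < 1) (hx0 : x ≠ 0) :
    HasDerivAt (Li 2) (-Real.log (1 - x) / x) x := by
  have h := key_deriv (fun n => 1 / ((n : ℝ) + 1) ^ 2) (c_bound 2) hx
  have e1 : (fun y : ℝ => ∑' n : ℕ, (1 / ((n : ℝ) + 1) ^ 2) * y ^ (n + 1)) = Li 2 :=
    funext fun y => (Li_eq 2 y).symm
  rw [e1] at h
  convert h using 1
  rw [← (hasSum_pow_div_log_of_abs_lt_one hx).tsum_eq]
  rw [show (fun n : ℕ => x ^ (n+1) / ((n:ℝ) + 1)) = fun n : ℕ => (1/((n:ℝ)+1)) * x ^ (n+1) from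
    funext fun n => by ring]
  rw [← tsum_shift_div hx0 (fun n => 1/((n:ℝ)+1))]
  exact (tsum_congr fun n => by field_simp [np1_ne n]).symm

lemma hasDerivAt_Li3 {x : ℝ} (hx : |x| < 1) (hx0 : x ≠ 0) :
    HasDerivAt (Li 3) (Li 2 x / x) x := by
  have h := key_deriv (fun n => 1 / ((n : ℝ) + 1) ^ 3) (c_bound 3) hx
  have e1 : (fun y : ℝ => ∑' n : ℕ, (1 / ((n : ℝ) + 1) ^ 3) * y ^ (n + 1)) = Li 3 :=
    funext fun y => (Li_eq 3 y).symm
  rw [e1] at h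
  convert h using 1
  rw [Li_eq 2 x, ← tsum_shift_div hx0 (fun n : ℕ => 1/((n:ℝ)+1)^2)]
  exact (tsum_congr fun n => by field_simp [np1_ne n])

lemma summable_H_pow {x : ℝ} (hx : |x| < 1) : Summable (fun n : ℕ => H n * x ^ n) := by
  apply Summable.of_norm_bounded (g := fun n : ℕ => (n : ℝ) ^ 1 * |x| ^ n)
  · exact summable_pow_mul_geometric_of_norm_lt_one 1 (by rwa [Real.norm_eq_abs, abs_abs])
  · intro n
    rw [Real.norm_eq_abs, abs_mul, abs_pow, abs_of_nonneg (H_nonneg n), pow_one]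
    exact mul_le_mul_of_nonneg_right (H_le n) (by positivity)

lemma tsum_H_pow {x : ℝ} (hx : |x| < 1) :
    ∑' n : ℕ, H n * x ^ n = -Real.log (1 - x) / (1 - x) := by
  have hx1 : x < 1 := lt_of_abs_lt hx
  have hne : (1 : ℝ) - x ≠ 0 := ne_of_gt (by linarith : (0:ℝ) < 1 - x)
  have hs : Summable (fun n : ℕ => H n * x ^ n) := summable_H_pow hx
  have hs1 : Summable (fun n : ℕ => H (n + 1) * x ^ (n + 1)) :=
    (summable_nat_add_iff 1).2 hs
  have hs2 : Summable (fun n : ℕ => H n * x ^ (n + 1)) :=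
    (hs.mul_left x).congr fun n => by ring
  have h1 : ∑' n : ℕ, H n * x ^ n = ∑' n : ℕ, H (n + 1) * x ^ (n + 1) := by
    rw [Summable.tsum_eq_zero_add hs, H_zero]; simp
  have h2 : (∑' n : ℕ, H (n + 1) * x ^ (n + 1)) - ∑' n : ℕ, H n * x ^ (n + 1)
      = -Real.log (1 - x) := by
    rw [← Summable.tsum_sub hs1 hs2, ← (hasSum_pow_div_log_of_abs_lt_one hx).tsum_eq]
    exact tsum_congr fun n => by rw [H_succ]; ring
  have h3 : ∑' n : ℕ, H n * x ^ (n + 1) = x * ∑' n : ℕ, H n * x ^ n := by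
    rw [show (fun n : ℕ => H n * x ^ (n + 1)) = fun n : ℕ => x * (H n * x ^ n) from
      funext fun n => by ring, tsum_mul_left]
  rw [h3, ← h1] at h2
  rw [eq_div_iff hne]
  linarith [h2]

lemma g_eq {x : ℝ} (hx : |x| < 1) :
    ∑' n : ℕ, (H n / ((n : ℝ) + 1)) * x ^ (n + 1) = Real.log (1 - x) ^ 2 / 2 := by
  have hb : ∀ n : ℕ, |H n / ((n : ℝ) + 1)| ≤ 1 := fun n => by
    simpa [pow_one] using cH_bound 1 le_rfl n
  set F := fun y : ℝ =>
    (∑' n : ℕ, (H n / ((n : ℝ) + 1)) * y ^ (n + 1)) - Real.log (1 - y) ^ 2 / 2 with hF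
  have hder : ∀ y ∈ Set.Ioo (-1 : ℝ) 1, HasDerivAt F 0 y := by
    intro y hy
    have hy1 : |y| < 1 := abs_lt.2 ⟨hy.1, hy.2⟩
    have hd1 := key_deriv (fun n => H n / ((n : ℝ) + 1)) hb hy1
    have hval : (∑' n : ℕ, ((n : ℝ) + 1) * (H n / ((n : ℝ) + 1)) * y ^ n)
        = -Real.log (1 - y) / (1 - y) := by
      rw [← tsum_H_pow hy1]
      exact tsum_congr fun n => by field_simp
    rw [hval] at hd1
    have hd2 : HasDerivAt (fun y : ℝ => Real.log (1 - y) ^ 2 / 2)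
        (-Real.log (1 - y) / (1 - y)) y := by
      have h := ((hasDerivAt_log_one_sub hy.2).pow 2).div_const 2
      refine hasDerivAt_of_eq h ?_
      have hne : (1 : ℝ) - y ≠ 0 := ne_of_gt (by linarith [hy.2] : (0:ℝ) < 1 - y)
      field_simp
      ring
    have := hd1.sub hd2
    exact hasDerivAt_of_eq this (sub_self _).symm
  have h0 : F 0 = 0 := by
    rw [hF]
    simp
  have hx' : x ∈ Set.Ioo (-1 : ℝ) 1 := ⟨(abs_lt.1 hx).1, (abs_lt.1 hx).2⟩
  have := const_of_deriv_zero_Ioo hder hx' (show (0:ℝ) ∈ Set.Ioo (-1:ℝ) 1 by norm_num)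
  rw [h0] at this
  have hFx : F x = 0 := this
  rw [hF] at hFx
  simp only at hFx
  linarith [hFx]

lemma hasDerivAt_Li21 {x : ℝ} (hx : |x| < 1) (hx0 : x ≠ 0) :
    HasDerivAt Li21 (Real.log (1 - x) ^ 2 / (2 * x)) x := by
  have h := key_deriv (fun n => H n / ((n : ℝ) + 1) ^ 2) (cH_bound 2 one_le_two) hx
  rw [show (fun y : ℝ => ∑' n : ℕ, (H n / ((n : ℝ) + 1) ^ 2) * y ^ (n + 1)) = Li21 from
    funext fun y => (Li21_eq y).symm] at h
  convert h using 1
  have e2 : ∑' n : ℕ, (H n / ((n : ℝ) + 1)) * x ^ n = Real.log (1 - x) ^ 2 / (2 * x) := by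
    rw [tsum_shift_div hx0 (fun n : ℕ => H n / ((n : ℝ) + 1)), g_eq hx]
    ring
  rw [← e2]
  exact tsum_congr fun n => by field_simp [np1_ne n]

lemma Li_zero (m : ℕ) : Li m 0 = 0 := by simp [Li]

lemma Li21_zero : Li21 0 = 0 := by simp [Li21]

lemma contAt_Li (m : ℕ) : ContinuousAt (Li m) 0 := by
  have h := key_deriv (fun n => 1 / ((n : ℝ) + 1) ^ m) (c_bound m) (x := 0) (by norm_num)
  rw [show (fun y : ℝ => ∑' n : ℕ, (1 / ((n : ℝ) + 1) ^ m) * y ^ (n + 1)) = Li m from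
    funext fun y => (Li_eq m y).symm] at h
  exact h.continuousAt

lemma contAt_Li21 : ContinuousAt Li21 0 := by
  have h := key_deriv (fun n => H n / ((n : ℝ) + 1) ^ 2) (cH_bound 2 one_le_two) (x := 0)
    (by norm_num)
  rw [show (fun y : ℝ => ∑' n : ℕ, (H n / ((n : ℝ) + 1) ^ 2) * y ^ (n + 1)) = Li21 from
    funext fun y => (Li21_eq y).symm] at h
  exact h.continuousAt

lemma summable_inv_pow (m : ℕ) (hm : 2 ≤ m) : Summable (fun n : ℕ => 1 / ((n : ℝ) + 1) ^ m) := by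
  have h : Summable (fun n : ℕ => 1 / ((n : ℝ)) ^ m) := Real.summable_one_div_nat_pow.2 (by omega)
  refine ((summable_nat_add_iff 1).2 h).congr fun n => ?_
  push_cast; ring

lemma tendsto_Li_one_sub (m : ℕ) (hm : 2 ≤ m) :
    Filter.Tendsto (fun x : ℝ => Li m (1 - x)) (nhdsWithin 0 (Set.Ioi 0)) (nhds (Li m 1)) := by
  have h := tendsto_tsum_of_dominated_convergence
    (f := fun (x : ℝ) (k : ℕ) => (1 - x) ^ (k + 1) / ((k : ℝ) + 1) ^ m)
    (g := fun k : ℕ => (1 : ℝ) ^ (k + 1) / ((k : ℝ) + 1) ^ m)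
    (𝓕 := nhdsWithin 0 (Set.Ioi 0)) (summable_inv_pow m hm) ?_ ?_
  · exact h
  · intro k
    have hc : Continuous (fun x : ℝ => (1 - x) ^ (k + 1) / ((k : ℝ) + 1) ^ m) :=
      ((continuous_const.sub continuous_id).pow _).div_const _
    have h2 := hc.tendsto 0
    simp only [sub_zero] at h2
    exact h2.mono_left nhdsWithin_le_nhds
  · filter_upwards [Ioo_mem_nhdsGT_of_mem (Set.mem_Ico.2 ⟨le_refl (0:ℝ), one_pos⟩)] with x hx k
    obtain ⟨hx0, hx1⟩ := hx
    rw [Real.norm_eq_abs, abs_div, abs_pow, abs_pow, abs_of_nonneg (by linarith : (0:ℝ) ≤ 1 - x),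
      abs_of_nonneg (np1_pos k).le]
    have hp : (1 - x) ^ (k + 1) ≤ 1 := pow_le_one₀ (by linarith) (by linarith)
    exact (div_le_div_iff_of_pos_right (by positivity)).2 hp

lemma Li2_one : Li 2 1 = π ^ 2 / 6 := by
  have hsum0 : (∑ i ∈ Finset.range 1, 1 / ((i:ℝ)) ^ 2) = 0 := by norm_num
  have h' : HasSum (fun n : ℕ => 1 / ((n:ℝ)) ^ 2)
      (π ^ 2 / 6 + ∑ i ∈ Finset.range 1, 1 / ((i:ℝ)) ^ 2) := by
    rw [hsum0, add_zero]; exact hasSum_zeta_two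
  have h : HasSum (fun n : ℕ => 1 / ((n + 1 : ℕ) : ℝ) ^ 2) (π ^ 2 / 6) :=
    (hasSum_nat_add_iff (f := fun n : ℕ => 1 / ((n:ℝ)) ^ 2) 1).2 h'
  have h2 : HasSum (fun n : ℕ => (1 : ℝ) ^ (n + 1) / ((n : ℝ) + 1) ^ 2) (π ^ 2 / 6) := by
    have e : (fun n : ℕ => (1 : ℝ) ^ (n + 1) / ((n : ℝ) + 1) ^ 2)
        = fun n : ℕ => 1 / ((n + 1 : ℕ) : ℝ) ^ 2 := funext fun n => by push_cast; norm_num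
    rw [e]
    exact h
  exact h2.tsum_eq

lemma log_one_sub_bound {x : ℝ} (h1 : 0 < x) (h2 : x ≤ 1 / 2) : |Real.log (1 - x)| ≤ 2 * x := by
  have hx1 : (0:ℝ) < 1 - x := by linarith
  have hneg : Real.log (1 - x) ≤ 0 := Real.log_nonpos (by linarith) (by linarith)
  rw [abs_of_nonpos hneg, ← Real.log_inv]
  have hle := Real.log_le_sub_one_of_pos (inv_pos.2 hx1)
  have he : (1 - x)⁻¹ - 1 = x / (1 - x) := by field_simp; ring
  have hb : x / (1 - x) ≤ 2 * x := by rw [div_le_iff₀ hx1]; nlinarith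
  calc Real.log (1 - x)⁻¹ ≤ (1 - x)⁻¹ - 1 := hle
    _ = x / (1 - x) := he
    _ ≤ 2 * x := hb

lemma tendsto_log_mul_log_pow (k : ℕ) (hk : 1 ≤ k) :
    Filter.Tendsto (fun x : ℝ => Real.log x * Real.log (1 - x) ^ k)
      (nhdsWithin 0 (Set.Ioi 0)) (nhds 0) := by
  have hg : Filter.Tendsto (fun x : ℝ => 2 ^ k * |Real.log x * x|)
      (nhdsWithin 0 (Set.Ioi 0)) (nhds 0) := by
    have h1 := tendsto_log_mul_rpow_nhdsGT_zero one_pos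
    have h2 : Filter.Tendsto (fun x : ℝ => Real.log x * x) (nhdsWithin 0 (Set.Ioi 0)) (nhds 0) := by
      refine h1.congr fun x => ?_
      rw [Real.rpow_one]
    have h3 := h2.abs
    simp only [abs_zero] at h3
    have h4 := h3.const_mul ((2:ℝ) ^ k)
    simpa using h4
  apply squeeze_zero_norm' _ hg
  filter_upwards [Ioo_mem_nhdsGT_of_mem
    (Set.mem_Ico.2 ⟨le_refl (0:ℝ), (by norm_num : (0:ℝ) < 1/2)⟩)] with x hx
  obtain ⟨hx0, hx2⟩ := hx
  have hxle1 : x ≤ 1 := by linarith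
  rw [Real.norm_eq_abs, abs_mul, abs_pow]
  calc |Real.log x| * |Real.log (1 - x)| ^ k
      ≤ |Real.log x| * (2 * x) ^ k := by
        gcongr
        exact log_one_sub_bound hx0 hx2.le
    _ = 2 ^ k * (|Real.log x| * x ^ k) := by rw [mul_pow]; ring
    _ ≤ 2 ^ k * (|Real.log x| * x) := by
        gcongr
        calc x ^ k ≤ x ^ 1 := pow_le_pow_of_le_one hx0.le hxle1 hk
          _ = x := pow_one x
    _ = 2 ^ k * |Real.log x * x| := by rw [abs_mul, abs_of_nonneg hx0.le]

lemma li2_reflection {x : ℝ} (hx : x ∈ Set.Ioo (0:ℝ) 1) :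
    Li 2 x + Li 2 (1 - x) + Real.log x * Real.log (1 - x) = π ^ 2 / 6 := by
  have hder : ∀ y ∈ Set.Ioo (0:ℝ) 1,
      HasDerivAt (fun y : ℝ => Li 2 y + Li 2 (1 - y) + Real.log y * Real.log (1 - y)) 0 y := by
    intro y hy
    obtain ⟨hy0, hy1⟩ := hy
    have hy1' : |y| < 1 := abs_lt.2 ⟨by linarith, hy1⟩
    have h1y : |1 - y| < 1 := abs_lt.2 ⟨by linarith, by linarith⟩
    have hA := hasDerivAt_Li2 hy1' (ne_of_gt hy0)
    have hone : HasDerivAt (fun z : ℝ => 1 - z) (-1) y := (hasDerivAt_id y).const_sub 1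
    have hB0 := (hasDerivAt_Li2 h1y (ne_of_gt (by linarith : (0:ℝ) < 1 - y))).comp y hone
    have hB : HasDerivAt (fun z : ℝ => Li 2 (1 - z)) (Real.log y / (1 - y)) y := by
      refine hasDerivAt_of_eq hB0 ?_
      rw [show (1:ℝ) - (1 - y) = y by ring]
      ring
    have hlx := Real.hasDerivAt_log (ne_of_gt hy0)
    have hl1x := hasDerivAt_log_one_sub hy1
    have hC := hlx.mul hl1x
    have hsum := (hA.add hB).add hC
    refine hasDerivAt_of_eq hsum ?_
    have hne1 : (1:ℝ) - y ≠ 0 := ne_of_gt (by linarith)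
    field_simp
    ring
  have hlim : Filter.Tendsto (fun y : ℝ => Li 2 y + Li 2 (1 - y) + Real.log y * Real.log (1 - y))
      (nhdsWithin 0 (Set.Ioi 0)) (nhds (π ^ 2 / 6)) := by
    have t1 : Filter.Tendsto (fun y : ℝ => Li 2 y) (nhdsWithin 0 (Set.Ioi 0)) (nhds 0) := by
      have h := (contAt_Li 2).tendsto
      rw [Li_zero] at h
      exact h.mono_left nhdsWithin_le_nhds
    have t2 := tendsto_Li_one_sub 2 le_rfl
    rw [Li2_one] at t2
    have t3 := tendsto_log_mul_log_pow 1 le_rfl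
    simp only [pow_one] at t3
    have h := (t1.add t2).add t3
    simpa using h
  exact eq_const_of_limit hder hlim hx

lemma main_identity {x : ℝ} (hx : x ∈ Set.Ioo (0:ℝ) 1) :
    Li21 x = Li 3 1 - Li 3 (1 - x) - Real.log (1 - x) * Li 2 x
      - Real.log x * Real.log (1 - x) ^ 2 / 2 + π ^ 2 / 6 * Real.log (1 - x) := by
  have hsuff : ∀ y ∈ Set.Ioo (0:ℝ) 1,
      (fun y : ℝ => Li21 y + Li 3 (1 - y) + Real.log (1 - y) * Li 2 y
        + Real.log y * Real.log (1 - y) ^ 2 / 2 - π ^ 2 / 6 * Real.log (1 - y) - Li 3 1) y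
        = 0 := by
    intro y hy
    apply eq_const_of_limit _ _ hy
    · intro z hz
      obtain ⟨hz0, hz1⟩ := hz
      have hz1' : |z| < 1 := abs_lt.2 ⟨by linarith, hz1⟩
      have h1z : |1 - z| < 1 := abs_lt.2 ⟨by linarith, by linarith⟩
      have h1zne : (0:ℝ) < 1 - z := by linarith
      have hone : HasDerivAt (fun w : ℝ => 1 - w) (-1) z := (hasDerivAt_id z).const_sub 1
      have hd1 := hasDerivAt_Li21 hz1' (ne_of_gt hz0)
      have hd2 := (hasDerivAt_Li3 h1z (ne_of_gt h1zne)).comp z hone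
      have hl1z := hasDerivAt_log_one_sub hz1
      have hlz := Real.hasDerivAt_log (ne_of_gt hz0)
      have hd3 := hl1z.mul (hasDerivAt_Li2 hz1' (ne_of_gt hz0))
      have hd4 := (hlz.mul (hl1z.pow 2)).div_const 2
      have hd5 := hl1z.const_mul (π ^ 2 / 6)
      have hF := ((((hd1.add hd2).add hd3).add hd4).sub hd5).sub_const (Li 3 1)
      refine hasDerivAt_of_eq hF ?_
      have key : Li 2 z + Li 2 (1 - z) + Real.log z * Real.log (1 - z) = π ^ 2 / 6 :=
        li2_reflection ⟨hz0, hz1⟩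
      have hne1 : (1:ℝ) - z ≠ 0 := ne_of_gt h1zne
      have hne0 : z ≠ 0 := ne_of_gt hz0
      norm_num
      linear_combination ((1:ℝ)/(1-z)) * key
    · have t1 : Filter.Tendsto Li21 (nhdsWithin 0 (Set.Ioi 0)) (nhds 0) := by
        have h := contAt_Li21.tendsto
        rw [Li21_zero] at h
        exact h.mono_left nhdsWithin_le_nhds
      have t2 := tendsto_Li_one_sub 3 (by norm_num)
      have tlog : Filter.Tendsto (fun y : ℝ => Real.log (1 - y))
          (nhdsWithin 0 (Set.Ioi 0)) (nhds 0) := by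
        have hc : ContinuousAt (fun y : ℝ => Real.log (1 - y)) 0 := by
          apply ContinuousAt.log
          · exact (continuous_const.sub continuous_id).continuousAt
          · norm_num
        have h := hc.tendsto
        simp only [sub_zero, Real.log_one] at h
        exact h.mono_left nhdsWithin_le_nhds
      have tLi2 : Filter.Tendsto (fun y : ℝ => Li 2 y) (nhdsWithin 0 (Set.Ioi 0)) (nhds 0) := by
        have h := (contAt_Li 2).tendsto
        rw [Li_zero] at h
        exact h.mono_left nhdsWithin_le_nhds
      have t3 := tlog.mul tLi2
      rw [mul_zero] at t3
      have t4 := (tendsto_log_mul_log_pow 2 one_le_two).div_const 2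
      rw [zero_div] at t4
      have t5 := tlog.const_mul (π ^ 2 / 6)
      rw [mul_zero] at t5
      have h := ((((t1.add t2).add t3).add t4).sub t5).sub_const (Li 3 1)
      have e : (0:ℝ) + Li 3 1 + 0 + 0 - 0 - Li 3 1 = 0 := by ring
      rw [e] at h
      exact h
  have h := hsuff x hx
  simp only at h
  linarith [h]

theorem stmt18 :
    Li21 ((((Real.sqrt 5 - 1) / 2)) ^ 2) =
      Li 3 1 - Li 3 (((Real.sqrt 5 - 1) / 2)) - Real.log (((Real.sqrt 5 - 1) / 2)) * Li 2 ((((Real.sqrt 5 - 1) / 2)) ^ 2) -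
        Real.log (((Real.sqrt 5 - 1) / 2)) ^ 3 + π ^ 2 / 6 * Real.log (((Real.sqrt 5 - 1) / 2)) := by
  have hs : Real.sqrt 5 ^ 2 = 5 := Real.sq_sqrt (by norm_num)
  have hs0 : 0 ≤ Real.sqrt 5 := Real.sqrt_nonneg 5
  have h1 : 1 < Real.sqrt 5 := by nlinarith
  have h3 : Real.sqrt 5 < 3 := by nlinarith
  set φ : ℝ := (Real.sqrt 5 - 1) / 2 with hφ
  have hφ0 : 0 < φ := by rw [hφ]; linarith
  have hφ1 : φ < 1 := by rw [hφ]; linarith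
  have hx : φ ^ 2 ∈ Set.Ioo (0:ℝ) 1 := ⟨by positivity, by nlinarith⟩
  have hfix : 1 - φ ^ 2 = φ := by
    rw [hφ]
    linear_combination (-(1:ℝ)/4) * hs
  have main := main_identity hx
  rw [hfix] at main
  rw [main, Real.log_pow]
  push_cast
  ring
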